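/- For the unit disk D and x ∈ [0,1), the average distance to the boundary from x is I_1^D(x) = (2/π) E(x), where E is the complete elliptic integral of the second kind. -/
import Mathlib


open Real

/-- The complete elliptic integral of the second kind. -/
noncomputable def ellipticE (k : ℝ) : ℝ :=
  ∫ θ in (0:ℝ)..(π / 2), Real.sqrt (1 - k ^ 2 * (sin θ) ^ 2)

/-- The complete elliptic integral of the first kind. -/
noncomputable def ellipticK (k : ℝ) : ℝ :=
  ∫ θ in (0:ℝ)..(π / 2), 1 / Real.sqrt (1 - k ^ 2 * (sin θ) ^ 2)

/-- The average distance to the boundary of the unit disk from the point x ∈ [0,1). -/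
theorem I1_unitDisk (x : ℝ) (hx : x ∈ Set.Ico (0:ℝ) 1) :
    (1 / (2 * π)) * ∫ φ in (0:ℝ)..(2 * π),
        (-x * cos φ + Real.sqrt (1 - x ^ 2 * (sin φ) ^ 2))
      = (2 / π) * ellipticE x := by
  have hg : Continuous fun φ : ℝ => Real.sqrt (1 - x ^ 2 * (sin φ) ^ 2) := by
    fun_prop
  have hint : ∀ a b : ℝ, IntervalIntegrable
      (fun φ => Real.sqrt (1 - x ^ 2 * (sin φ) ^ 2)) MeasureTheory.volume a b :=
    fun a b => hg.intervalIntegrable a b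
  have hper : ∀ φ : ℝ, Real.sqrt (1 - x ^ 2 * (sin (φ + π)) ^ 2)
      = Real.sqrt (1 - x ^ 2 * (sin φ) ^ 2) := by
    intro φ; rw [Real.sin_add_pi]; ring_nf
  have hrefl : ∀ φ : ℝ, Real.sqrt (1 - x ^ 2 * (sin (π - φ)) ^ 2)
      = Real.sqrt (1 - x ^ 2 * (sin φ) ^ 2) := by
    intro φ; rw [Real.sin_pi_sub]
  have hsplit : (∫ φ in (0:ℝ)..(2 * π),
        (-x * cos φ + Real.sqrt (1 - x ^ 2 * (sin φ) ^ 2)))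
      = (∫ φ in (0:ℝ)..(2 * π), -x * cos φ)
        + ∫ φ in (0:ℝ)..(2 * π), Real.sqrt (1 - x ^ 2 * (sin φ) ^ 2) := by
    exact intervalIntegral.integral_add ((by fun_prop : Continuous fun φ : ℝ => -x * cos φ).intervalIntegrable _ _) (hint _ _)
  have hcos : (∫ φ in (0:ℝ)..(2 * π), -x * cos φ) = 0 := by
    simp [intervalIntegral.integral_const_mul, integral_cos, Real.sin_two_pi]
  have hhalf : (∫ φ in (π/2:ℝ)..π, Real.sqrt (1 - x ^ 2 * (sin φ) ^ 2))
      = ∫ φ in (0:ℝ)..(π/2), Real.sqrt (1 - x ^ 2 * (sin φ) ^ 2) := by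
    have h := intervalIntegral.integral_comp_sub_left (a := 0) (b := π/2)
      (fun φ => Real.sqrt (1 - x ^ 2 * (sin φ) ^ 2)) π
    simp only [sub_zero] at h
    have h2 : π - π/2 = π/2 := by ring
    rw [h2] at h
    rw [← h]
    exact intervalIntegral.integral_congr (fun φ _ => hrefl φ)
  have hpi : (∫ φ in (0:ℝ)..π, Real.sqrt (1 - x ^ 2 * (sin φ) ^ 2))
      = 2 * ∫ φ in (0:ℝ)..(π/2), Real.sqrt (1 - x ^ 2 * (sin φ) ^ 2) := by
    rw [← intervalIntegral.integral_add_adjacent_intervals (hint 0 (π/2)) (hint (π/2) π), hhalf]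
    ring
  have hshift : (∫ φ in (π:ℝ)..(2*π), Real.sqrt (1 - x ^ 2 * (sin φ) ^ 2))
      = ∫ φ in (0:ℝ)..π, Real.sqrt (1 - x ^ 2 * (sin φ) ^ 2) := by
    have h := intervalIntegral.integral_comp_add_right (a := 0) (b := π)
      (fun φ => Real.sqrt (1 - x ^ 2 * (sin φ) ^ 2)) π
    simp only [zero_add] at h
    have h2 : π + π = 2 * π := by ring
    rw [h2] at h
    rw [← h]
    exact intervalIntegral.integral_congr (fun φ _ => hper φ)
  have htot : (∫ φ in (0:ℝ)..(2*π), Real.sqrt (1 - x ^ 2 * (sin φ) ^ 2))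
      = 4 * ellipticE x := by
    rw [← intervalIntegral.integral_add_adjacent_intervals (hint 0 π) (hint π (2*π)),
      hshift, hpi, ellipticE]
    ring
  rw [hsplit, hcos, htot]
  have hπ : π ≠ 0 := Real.pi_ne_zero
  field_simp
  ring
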